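/- Let n ≥ 1, let m ≥ 1, and let j₁, …, j_m : ℝⁿ → ℝ be smooth functions with ∑_{i=1}^m j_i(x)² = 1 for all x ∈ ℝⁿ. Then for every smooth φ : ℝⁿ → ℂ and every x ∈ ℝⁿ, ∑_{i=1}^m j_i(x)·Δ(j_i φ)(x) = Δφ(x) − (∑_{i=1}^m ‖∇j_i(x)‖²)·φ(x). (This is the IMS localization formula −Δ = ∑_i j_i(−Δ)j_i − ∑_i |∇j_i|² at the pointwise level.) -/

import Mathlib

/-- The Laplacian of a function `u : ℝⁿ → ℂ` at a point `x`. -/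
noncomputable def lap {n : ℕ} (u : EuclideanSpace ℝ (Fin n) → ℂ)
    (x : EuclideanSpace ℝ (Fin n)) : ℂ :=
  ∑ i, fderiv ℝ (fun y => fderiv ℝ u y (EuclideanSpace.single i 1)) x
    (EuclideanSpace.single i 1)

/-- The gradient of a real-valued function `f : ℝⁿ → ℝ` at a point `x`. -/
noncomputable def gradR {n : ℕ} (f : EuclideanSpace ℝ (Fin n) → ℝ)
    (x : EuclideanSpace ℝ (Fin n)) : EuclideanSpace ℝ (Fin n) :=
  (WithLp.equiv 2 (Fin n → ℝ)).symm fun i => fderiv ℝ f x (EuclideanSpace.single i 1)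

/-!
The Laplacian is a sum of second directional derivatives `∂ᵥ²` along the coordinate vectors,
so it suffices to prove the formula for a single `∂ᵥ²`. By Leibniz,
`∂ᵥ²(jᵢ φ) = jᵢ ∂ᵥ²φ + 2 ∂ᵥjᵢ ∂ᵥφ + (∂ᵥ²jᵢ) φ`. Multiplying by `jᵢ` and summing, the first term
gives `∂ᵥ²φ` since `∑ jᵢ² = 1`; differentiating this identity once gives `∑ jᵢ ∂ᵥjᵢ = 0`, which
kills the middle term, and differentiating it twice gives `∑ jᵢ ∂ᵥ²jᵢ = -∑ (∂ᵥjᵢ)²`.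
-/

section SecondDirDeriv

variable {E F : Type*} [NormedAddCommGroup E] [NormedSpace ℝ E]
  [NormedAddCommGroup F] [NormedSpace ℝ F]

noncomputable def secondDirDeriv (f : E → F) (v x : E) : F :=
  fderiv ℝ (fun y => fderiv ℝ f y v) x v

lemma ContDiff.fderiv_apply_const {k : WithTop ℕ∞} {f : E → F} (hf : ContDiff ℝ (k + 1) f)
    (v : E) : ContDiff ℝ k (fun y => fderiv ℝ f y v) :=
  (hf.fderiv_right le_rfl).clm_apply contDiff_const

lemma fderiv_smul_apply {f : E → ℝ} {g : E → F} (hf : Differentiable ℝ f)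
    (hg : Differentiable ℝ g) (v : E) :
    (fun y => fderiv ℝ (fun z => f z • g z) y v)
      = fun y => f y • fderiv ℝ g y v + fderiv ℝ f y v • g y := by
  funext y
  rw [fderiv_fun_smul (hf y) (hg y)]
  simp

lemma secondDirDeriv_smul {f : E → ℝ} {g : E → F} (hf : ContDiff ℝ 2 f)
    (hg : ContDiff ℝ 2 g) (v x : E) :
    secondDirDeriv (fun z => f z • g z) v x
      = f x • secondDirDeriv g v x + (2 * fderiv ℝ f x v) • fderiv ℝ g x v
        + secondDirDeriv f v x • g x := by
  have hf' := (hf.fderiv_apply_const v).differentiable one_ne_zero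
  have hg' := (hg.fderiv_apply_const v).differentiable one_ne_zero
  have hf₁ := hf.differentiable two_ne_zero
  have hg₁ := hg.differentiable two_ne_zero
  rw [secondDirDeriv, fderiv_smul_apply hf₁ hg₁,
    fderiv_fun_add ((hf₁ x).fun_smul (hg' x)) ((hf' x).fun_smul (hg₁ x)),
    add_apply, fderiv_fun_smul (hf₁ x) (hg' x),
    fderiv_fun_smul (hf' x) (hg₁ x)]
  simp only [add_apply, smul_apply,
    ContinuousLinearMap.smulRight_apply, secondDirDeriv]
  rw [two_mul, add_smul]
  abel

variable {ι : Type*} [Fintype ι] {j : ι → E → ℝ}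

lemma sum_mul_fderiv_apply_eq_zero_of_sum_sq_const {c : ℝ} (hj : ∀ i, Differentiable ℝ (j i))
    (hsum : ∀ x, ∑ i, j i x ^ 2 = c) (v y : E) :
    ∑ i, j i y * fderiv ℝ (j i) y v = 0 := by
  have hconst : fderiv ℝ (fun z => ∑ i, j i z ^ 2) y v = 0 := by
    simp [funext hsum]
  rw [fderiv_fun_sum (A := fun i z => j i z ^ 2) fun i _ => (hj i y).pow 2] at hconst
  simpa only [sum_apply, fderiv_fun_pow 2 (hj _ y), smul_apply, smul_eq_mul,
    Nat.add_one_sub_one, pow_one, nsmul_eq_mul, Nat.cast_ofNat, mul_assoc, ← Finset.mul_sum,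
    mul_eq_zero, two_ne_zero, false_or] using hconst

lemma sum_sq_fderiv_apply_add_sum_mul_secondDirDeriv {c : ℝ} (hj : ∀ i, ContDiff ℝ 2 (j i))
    (hsum : ∀ x, ∑ i, j i x ^ 2 = c) (v x : E) :
    ∑ i, fderiv ℝ (j i) x v ^ 2 + ∑ i, j i x * secondDirDeriv (j i) v x = 0 := by
  have hj₁ i := (hj i).differentiable two_ne_zero
  have hj' i := ((hj i).fderiv_apply_const v).differentiable one_ne_zero
  have hconst : fderiv ℝ (fun y => ∑ i, j i y * fderiv ℝ (j i) y v) x v = 0 := by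
    simp [sum_mul_fderiv_apply_eq_zero_of_sum_sq_const hj₁ hsum]
  rw [fderiv_fun_sum (A := fun i y => j i y * fderiv ℝ (j i) y v)
    fun i _ => (hj₁ i x).mul (hj' i x)] at hconst
  simp only [sum_apply, fderiv_fun_mul (hj₁ _ x) (hj' _ x), add_apply,
    smul_apply, smul_eq_mul, Finset.sum_add_distrib] at hconst
  simpa only [secondDirDeriv, sq, add_comm] using hconst

lemma sum_smul_secondDirDeriv_smul_of_sum_sq_eq_one (hj : ∀ i, ContDiff ℝ 2 (j i))
    (hsum : ∀ x, ∑ i, j i x ^ 2 = 1) {g : E → F} (hg : ContDiff ℝ 2 g) (v x : E) :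
    ∑ i, j i x • secondDirDeriv (fun z => j i z • g z) v x
      = secondDirDeriv g v x - (∑ i, fderiv ℝ (j i) x v ^ 2) • g x := by
  have hsq : ∑ i, j i x * j i x = 1 := by simpa only [sq] using hsum x
  have hfirst : ∑ i, j i x * (2 * fderiv ℝ (j i) x v) = 0 := by
    simp only [mul_left_comm _ (2 : ℝ), ← Finset.mul_sum,
      sum_mul_fderiv_apply_eq_zero_of_sum_sq_const
        (fun i => (hj i).differentiable two_ne_zero) hsum, mul_zero]
  have hsecond : ∑ i, j i x * secondDirDeriv (j i) v x = -∑ i, fderiv ℝ (j i) x v ^ 2 :=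
    eq_neg_of_add_eq_zero_right (sum_sq_fderiv_apply_add_sum_mul_secondDirDeriv hj hsum v x)
  simp only [secondDirDeriv_smul (hj _) hg, smul_add, smul_smul, Finset.sum_add_distrib,
    ← Finset.sum_smul, hsq, hfirst, hsecond, one_smul, zero_smul, add_zero, neg_smul,
    sub_eq_add_neg]

end SecondDirDeriv

lemma lap_eq_sum_secondDirDeriv {n : ℕ} (u : EuclideanSpace ℝ (Fin n) → ℂ)
    (x : EuclideanSpace ℝ (Fin n)) :
    lap u x = ∑ k, secondDirDeriv u (EuclideanSpace.single k 1) x :=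
  rfl

lemma norm_gradR_sq {n : ℕ} (f : EuclideanSpace ℝ (Fin n) → ℝ) (x : EuclideanSpace ℝ (Fin n)) :
    ‖gradR f x‖ ^ 2 = ∑ k, fderiv ℝ f x (EuclideanSpace.single k 1) ^ 2 := by
  simp [gradR, EuclideanSpace.norm_sq_eq]

theorem IMS_localization_general {n m : ℕ}
    (j : Fin m → EuclideanSpace ℝ (Fin n) → ℝ)
    (hj : ∀ i, ContDiff ℝ (⊤ : ℕ∞) (j i))
    (hsum : ∀ x, ∑ i, (j i x) ^ 2 = 1)
    (φ : EuclideanSpace ℝ (Fin n) → ℂ) (hφ : ContDiff ℝ (⊤ : ℕ∞) φ)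
    (x : EuclideanSpace ℝ (Fin n)) :
    ∑ i, (j i x : ℂ) * lap (fun y => (j i y : ℂ) * φ y) x
      = lap φ x - ((∑ i, ‖gradR (j i) x‖ ^ 2 : ℝ) : ℂ) * φ x := by
  have hj₂ i : ContDiff ℝ 2 (j i) := (hj i).of_le (WithTop.coe_le_coe.mpr le_top)
  have hφ₂ : ContDiff ℝ 2 φ := hφ.of_le (WithTop.coe_le_coe.mpr le_top)
  have hdir k := sum_smul_secondDirDeriv_smul_of_sum_sq_eq_one hj₂ hsum hφ₂
    (EuclideanSpace.single k 1) x
  simp only [← Complex.real_smul, norm_gradR_sq, lap_eq_sum_secondDirDeriv, Finset.smul_sum]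
  rw [Finset.sum_comm, Finset.sum_comm (γ := Fin m), Finset.sum_smul, ← Finset.sum_sub_distrib]
  simp only [hdir, Finset.sum_smul]

/-- IMS localization formula: if `∑ i, jᵢ² ≡ 1`, then
`∑ i, jᵢ Δ(jᵢ φ) = Δφ − (∑ i, ‖∇jᵢ‖²) φ` pointwise. -/
theorem IMS_localization {n m : ℕ} (hn : 1 ≤ n) (hm : 1 ≤ m)
    (j : Fin m → EuclideanSpace ℝ (Fin n) → ℝ)
    (hj : ∀ i, ContDiff ℝ (⊤ : ℕ∞) (j i))
    (hsum : ∀ x, ∑ i, (j i x) ^ 2 = 1)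
    (φ : EuclideanSpace ℝ (Fin n) → ℂ) (hφ : ContDiff ℝ (⊤ : ℕ∞) φ)
    (x : EuclideanSpace ℝ (Fin n)) :
    ∑ i, (j i x : ℂ) * lap (fun y => (j i y : ℂ) * φ y) x
      = lap φ x - ((∑ i, ‖gradR (j i) x‖ ^ 2 : ℝ) : ℂ) * φ x :=
  IMS_localization_general j hj hsum φ hφ x
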